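/- The minimal value of area(π) + bounce(π) over all Dyck paths π of semilength n equals C(n,2) − g(n), where g(0)=0 and g(n) = max_{1≤k≤n} [(k−1)(n−k) + g(n−k)]. -/

import Mathlib

/-- A Dyck path of semilength `n`, encoded as a list of steps
(`true` = north, `false` = east), staying weakly above the diagonal. -/
def IsDyck (n : ℕ) (w : List Bool) : Prop :=
  w.length = 2 * n ∧ w.count true = n ∧
    ∀ k, (w.take k).count false ≤ (w.take k).count true

/-- The area of a Dyck path: the number of whole unit cells between the
path and the diagonal (on each north step, the current number of east
steps is subtracted from the current number of north steps). -/
def area (w : List Bool) : ℕ :=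
  (w.foldl
    (fun (p : ℕ × ℕ × ℕ) s =>
      if s then (p.1 + (p.2.1 - p.2.2), p.2.1 + 1, p.2.2)
      else (p.1, p.2.1, p.2.2 + 1)) (0, 0, 0)).1

/-- `hgt w b` is the number of north steps of `w` preceding its `(b+1)`-st
east step, i.e. the height at which the bounce path heading north along
the line `x = b` meets an east step of `w`. -/
def hgt : List Bool → ℕ → ℕ
  | [], _ => 0
  | true :: w, b => hgt w b + 1
  | false :: _, 0 => 0
  | false :: w, b + 1 => hgt w b

/-- The `i`-th bounce point (a height on the diagonal) of a Dyck path. -/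
def bpt (w : List Bool) (i : ℕ) : ℕ := (hgt w)^[i] 0

/-- The bounce statistic of a Dyck path of semilength `n`:
`∑ (n - b_i)` over the successive bounce points `b_i`, `i ≥ 1`
(once the bounce path reaches `n` the terms vanish). -/
def bounce (n : ℕ) (w : List Bool) : ℕ :=
  ∑ i ∈ Finset.range n, (n - bpt w (i + 1))

/-- The Dyck path `N^{α₁}E^{α₁} ⋯ N^{α_ℓ}E^{α_ℓ}` of a composition `α`. -/
def pComp (α : List ℕ) : List Bool :=
  α.foldr (fun a acc => List.replicate a true ++ List.replicate a false ++ acc) []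

/-- `g 0 = 0` and `g n = max_{1 ≤ k ≤ n} ((k-1)(n-k) + g (n-k))`
(below, `k = j + 1` with `j` ranging over `0, …, n-1`). -/
def g : ℕ → ℕ
  | 0 => 0
  | n + 1 => (Finset.range (n + 1)).sup (fun j => j * (n - j) + g (n - j))
decreasing_by
  omega

/-! ### auxiliary -/

/-- remove the first `k` east steps (falses), keeping all norths -/
def dropF : ℕ → List Bool → List Bool
  | 0, w => w
  | _+1, [] => []
  | k+1, true :: w => true :: dropF (k+1) w
  | k+1, false :: w => dropF k w
termination_by k w => w.length

@[simp] lemma dropF_nil (k : ℕ) : dropF k [] = [] := by cases k <;> simp [dropF]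

@[simp] lemma dropF_zero (w : List Bool) : dropF 0 w = w := by simp [dropF]

lemma dropF_true (k : ℕ) (w : List Bool) :
    dropF k (true :: w) = true :: dropF k w := by cases k <;> simp [dropF]

lemma dropF_false (k : ℕ) (w : List Bool) :
    dropF (k+1) (false :: w) = dropF k w := by simp [dropF]

lemma count_true_add_count_false (w : List Bool) :
    w.count true + w.count false = w.length := by
  induction w with
  | nil => simp
  | cons a w ih => cases a <;> simp [List.count_cons] <;> omega

lemma count_true_dropF (k : ℕ) (w : List Bool) :
    (dropF k w).count true = w.count true := by
  induction w generalizing k with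
  | nil => simp
  | cons a w ih =>
    cases a
    · cases k with
      | zero => simp
      | succ k => rw [dropF_false, ih]; simp [List.count_cons]
    · rw [dropF_true]; simp [List.count_cons, ih]

lemma count_false_dropF (k : ℕ) (w : List Bool) :
    (dropF k w).count false = w.count false - k := by
  induction w generalizing k with
  | nil => simp
  | cons a w ih =>
    cases a
    · cases k with
      | zero => simp
      | succ k => rw [dropF_false, ih]; simp [List.count_cons]
    · rw [dropF_true]; simp [List.count_cons, ih]

lemma hgt_dropF (j : ℕ) (w : List Bool) (b : ℕ) :
    hgt (dropF j w) b = hgt w (j + b) := by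
  induction w generalizing j b with
  | nil => rw [dropF_nil]; rfl
  | cons a w ih =>
    cases a
    · cases j with
      | zero => simp
      | succ j =>
        rw [dropF_false, ih]
        have h : j + 1 + b = (j + b) + 1 := by omega
        rw [h]
        rfl
    · rw [dropF_true]
      show hgt (dropF j w) b + 1 = hgt w (j + b) + 1
      rw [ih]

lemma take_dropF (w : List Bool) (k p : ℕ) :
    ∃ q, (dropF k w).take p = dropF k (w.take q) := by
  induction w generalizing k p with
  | nil => exact ⟨0, by simp⟩
  | cons a w ih =>
    cases a
    · cases k with
      | zero => exact ⟨p, by simp⟩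
      | succ k =>
        obtain ⟨q, hq⟩ := ih k p
        exact ⟨q + 1, by rw [dropF_false, hq, List.take_succ_cons, dropF_false]⟩
    · cases p with
      | zero => exact ⟨0, by simp⟩
      | succ p =>
        obtain ⟨q, hq⟩ := ih k p
        refine ⟨q + 1, ?_⟩
        rw [dropF_true]
        show true :: (dropF k w).take p = dropF k (true :: w.take q)
        rw [dropF_true, hq]

lemma dropF_rep_false (k : ℕ) (u : List Bool) :
    dropF k (List.replicate k false ++ u) = u := by
  induction k with
  | zero => simp
  | succ k ih => rw [List.replicate_succ, List.cons_append, dropF_false]; exact ih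

lemma hgt_rep_true (k : ℕ) (t : List Bool) (b : ℕ) :
    hgt (List.replicate k true ++ t) b = k + hgt t b := by
  induction k with
  | zero => simp
  | succ k ih =>
    rw [List.replicate_succ]
    show hgt (List.replicate k true ++ t) b + 1 = k + 1 + hgt t b
    rw [ih]; omega

lemma hgt_le (w : List Bool) (b : ℕ) : hgt w b ≤ w.count true := by
  induction w generalizing b with
  | nil => simp [hgt]
  | cons a w ih =>
    cases a
    · cases b with
      | zero => simp [hgt]
      | succ b => show hgt w b ≤ _; simp [List.count_cons]; exact ih b
    · show hgt w b + 1 ≤ _; simp [List.count_cons]; exact ih b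

lemma take_hgt_zero (w : List Bool) :
    w.take (hgt w 0) = List.replicate (hgt w 0) true ∧ hgt (w.drop (hgt w 0)) 0 = 0 := by
  induction w with
  | nil => simp [hgt]
  | cons a w ih =>
    cases a
    · exact ⟨rfl, rfl⟩
    · have h1 : hgt (true :: w) 0 = hgt w 0 + 1 := rfl
      rw [h1, List.take_succ_cons, List.drop_succ_cons, List.replicate_succ]
      exact ⟨by rw [ih.1], ih.2⟩

lemma hgt_lb (w : List Bool) (c b : ℕ)
    (h : ∀ p, (w.take p).count false ≤ c + (w.take p).count true) :
    min (b + 1) (w.count false) ≤ c + hgt w b := by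
  induction w generalizing c b with
  | nil => simp
  | cons a w ih =>
    cases a
    · have hc : 1 ≤ c := by simpa using h 1
      cases b with
      | zero =>
        show min 1 _ ≤ c + 0
        omega
      | succ b =>
        have h' : ∀ p, (w.take p).count false ≤ (c - 1) + (w.take p).count true := by
          intro p
          have := h (p + 1)
          simp [List.count_cons] at this
          omega
        have := ih (c - 1) b h'
        show min (b + 2) ((false :: w).count false) ≤ c + hgt w b
        simp [List.count_cons] at *
        omega
    · have h' : ∀ p, (w.take p).count false ≤ (c + 1) + (w.take p).count true := by
        intro p
        have := h (p + 1)
        simp [List.count_cons] at this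
        omega
      have := ih (c + 1) b h'
      show min (b + 1) ((true :: w).count false) ≤ c + (hgt w b + 1)
      simp [List.count_cons] at *
      omega

/-! ### bpt lemmas -/

@[simp] lemma bpt_zero (w : List Bool) : bpt w 0 = 0 := rfl

lemma bpt_succ (w : List Bool) (i : ℕ) : bpt w (i + 1) = hgt w (bpt w i) :=
  Function.iterate_succ_apply' _ _ _

lemma bpt_le (w : List Bool) (i : ℕ) : bpt w i ≤ w.count true := by
  cases i with
  | zero => simp
  | succ i => rw [bpt_succ]; exact hgt_le _ _

lemma bpt_lb (w : List Bool)
    (h : ∀ p, (w.take p).count false ≤ (w.take p).count true) (i : ℕ) :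
    min i (w.count false) ≤ bpt w i := by
  induction i with
  | zero => simp
  | succ i ih =>
    rw [bpt_succ]
    have h2 := hgt_lb w 0 (bpt w i) (by simpa using h)
    omega

/-! ### area via explicit recursion -/

def A : List Bool → ℕ → ℕ → ℕ
  | [], _, _ => 0
  | true :: w, N, E => (N - E) + A w (N + 1) E
  | false :: w, N, E => A w N (E + 1)

lemma foldl_area (w : List Bool) (a N E : ℕ) :
    (w.foldl
      (fun (p : ℕ × ℕ × ℕ) s =>
        if s then (p.1 + (p.2.1 - p.2.2), p.2.1 + 1, p.2.2)
        else (p.1, p.2.1, p.2.2 + 1)) (a, N, E)).1 = a + A w N E := by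
  induction w generalizing a N E with
  | nil => simp [A]
  | cons s w ih =>
    cases s
    · show (w.foldl _ ((a, N, E + 1) : ℕ × ℕ × ℕ)).1 = a + A (false :: w) N E
      rw [ih]
      rfl
    · show (w.foldl _ ((a + (N - E), N + 1, E) : ℕ × ℕ × ℕ)).1 = a + A (true :: w) N E
      rw [ih]
      show a + (N - E) + A w (N + 1) E = a + ((N - E) + A w (N + 1) E)
      omega

lemma area_eq (w : List Bool) : area w = A w 0 0 := by
  simpa [area] using foldl_area w 0 0 0

lemma A_shift (w : List Bool) (N E : ℕ) : A w (N + 1) (E + 1) = A w N E := by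
  induction w generalizing N E with
  | nil => simp [A]
  | cons a w ih =>
    cases a
    · simp [A, ih]
    · simp [A, ih]

lemma A_shift' (w : List Bool) (N E j : ℕ) : A w (N + j) (E + j) = A w N E := by
  induction j with
  | zero => rfl
  | succ j ih => rw [show N + (j+1) = (N+j)+1 by rfl, show E + (j+1) = (E+j)+1 by rfl,
      A_shift, ih]

lemma A_rep_true (k : ℕ) (t : List Bool) :
    A (List.replicate k true ++ t) 0 0 = k.choose 2 + A t k 0 := by
  have key : ∀ k t N, A (List.replicate k true ++ t) N 0 =
      (∑ i ∈ Finset.range k, (N + i)) + A t (N + k) 0 := by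
    intro k
    induction k with
    | zero => simp
    | succ k ih =>
      intro t N
      rw [List.replicate_succ]
      show (N - 0) + A (List.replicate k true ++ t) (N + 1) 0 = _
      rw [ih t (N + 1), Finset.sum_range_succ' (fun i => N + i) k]
      have : N + 1 + k = N + (k + 1) := by omega
      rw [this]
      have : ∑ i ∈ Finset.range k, (N + 1 + i) = ∑ i ∈ Finset.range k, (N + (i + 1)) := by
        apply Finset.sum_congr rfl; intro i _; omega
      omega
  have := key k t 0
  simpa [Nat.choose_two_right, Finset.sum_range_id] using this

lemma A_rep_false (k : ℕ) (t : List Bool) (N E : ℕ) :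
    A (List.replicate k false ++ t) N E = A t N (E + k) := by
  induction k generalizing E with
  | zero => simp
  | succ k ih =>
    rw [List.replicate_succ]
    show A (List.replicate k false ++ t) N (E + 1) = _
    rw [ih]; congr 1; omega

lemma A_mono_E (w : List Bool) (N E : ℕ) : A w N (E + 1) ≤ A w N E := by
  induction w generalizing N E with
  | nil => simp [A]
  | cons a w ih =>
    cases a
    · exact ih N (E + 1)
    · show (N - (E+1)) + A w (N+1) (E+1) ≤ (N - E) + A w (N+1) E
      have := ih (N + 1) E
      omega

lemma A_dropF (w : List Bool) (j N E : ℕ) (hj : j ≤ N) :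
    A (dropF j w) (N - j) E ≤ A w N E := by
  induction w generalizing j N E with
  | nil => simp [A]
  | cons a w ih =>
    cases a
    · cases j with
      | zero => simp
      | succ j =>
        rw [dropF_false]
        show A (dropF j w) (N - (j+1)) E ≤ A w N (E + 1)
        have h1 : A (dropF j w) (N - j) (E + 1) ≤ A w N (E + 1) := ih j N (E+1) (by omega)
        have h2 : A (dropF j w) (N - (j+1)) E = A (dropF j w) (N - j) (E + 1) := by
          have : N - j = (N - (j+1)) + 1 := by omega
          rw [this, ← A_shift]
        omega
    · rw [dropF_true]
      show ((N - j) - E) + A (dropF j w) (N - j + 1) E ≤ (N - E) + A w (N + 1) E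
      have h1 := ih j (N + 1) E (by omega)
      have h2 : N + 1 - j = N - j + 1 := by omega
      rw [h2] at h1
      omega

/-! ### decomposition of a Dyck path at its first bounce -/

lemma dyck_decomp (n : ℕ) (w : List Bool) (hw : IsDyck n w) :
    IsDyck (n - hgt w 0) (dropF (hgt w 0) (w.drop (hgt w 0))) := by
  obtain ⟨hlen, hct, hpre⟩ := hw
  set k := hgt w 0 with hk
  have hkn : k ≤ n := hct ▸ hgt_le w 0
  have hcf : w.count false = n := by have := count_true_add_count_false w; omega
  have hdecomp : w = List.replicate k true ++ w.drop k := by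
    conv_lhs => rw [← List.take_append_drop k w]
    rw [(take_hgt_zero w).1]
  set t := w.drop k with ht
  have hctt : t.count true = n - k := by
    have := congrArg (List.count true) hdecomp
    simp [List.count_append, List.count_replicate] at this
    omega
  have hcft : t.count false = n := by
    have := congrArg (List.count false) hdecomp
    simp [List.count_append, List.count_replicate] at this
    omega
  have hpret : ∀ q, (t.take q).count false ≤ k + (t.take q).count true := by
    intro q
    have := hpre (k + q)
    rw [hdecomp] at this
    rw [List.take_append] at this
    simp [List.take_replicate, List.count_append, List.count_replicate,
      List.length_replicate] at this
    omega
  refine ⟨?_, ?_, ?_⟩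
  · have h1 := count_true_add_count_false (dropF k t)
    rw [count_true_dropF, count_false_dropF, hctt, hcft] at h1
    omega
  · rw [count_true_dropF, hctt]
  · intro p
    obtain ⟨q, hq⟩ := take_dropF t k p
    rw [hq, count_true_dropF, count_false_dropF]
    have := hpret q
    omega

lemma area_decomp (w : List Bool) :
    (hgt w 0).choose 2 + area (dropF (hgt w 0) (w.drop (hgt w 0))) ≤ area w := by
  set k := hgt w 0 with hk
  have hdecomp : w = List.replicate k true ++ w.drop k := by
    conv_lhs => rw [← List.take_append_drop k w]
    rw [(take_hgt_zero w).1]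
  set t := w.drop k with ht
  rw [area_eq, area_eq]
  conv_rhs => rw [hdecomp]
  rw [A_rep_true]
  have := A_dropF t k k 0 (le_refl k)
  simp at this
  omega

lemma bpt_decomp (w : List Bool) (i : ℕ) :
    bpt w (i + 1) = hgt w 0 + bpt (dropF (hgt w 0) (w.drop (hgt w 0))) i := by
  set k := hgt w 0 with hk
  have hdecomp : w = List.replicate k true ++ w.drop k := by
    conv_lhs => rw [← List.take_append_drop k w]
    rw [(take_hgt_zero w).1]
  set t := w.drop k with ht
  have ht0 : hgt t 0 = 0 := (take_hgt_zero w).2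
  have hgtw : ∀ b, hgt w (k + b) = k + hgt (dropF k t) b := by
    intro b
    rw [hgt_dropF]
    conv_lhs => rw [hdecomp]
    rw [hgt_rep_true]
  induction i with
  | zero =>
    rw [bpt_succ]
    simp only [bpt_zero]
    conv_lhs => rw [hdecomp]
    rw [hgt_rep_true, ht0]
  | succ i ih =>
    rw [bpt_succ, ih, hgtw, ← bpt_succ]

lemma bounce_decomp (n : ℕ) (w : List Bool) (hw : IsDyck n w) (hn : 1 ≤ n) :
    bounce n w = (n - hgt w 0) + bounce (n - hgt w 0) (dropF (hgt w 0) (w.drop (hgt w 0))) := by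
  set k := hgt w 0 with hk
  set w' := dropF k (w.drop k) with hw'
  have hd := dyck_decomp n w hw
  rw [← hk, ← hw'] at hd
  obtain ⟨hlen', hct', hpre'⟩ := hd
  have hcf' : w'.count false = n - k := by
    have := count_true_add_count_false w'; omega
  have hkn : k ≤ n := hw.2.1 ▸ hgt_le w 0
  have hk1 : 1 ≤ k := by
    have hcf : w.count false = n := by
      have := count_true_add_count_false w
      have := hw.1; have := hw.2.1; omega
    have := hgt_lb w 0 0 (by simpa using hw.2.2)
    rw [hcf] at this
    omega
  set m := n - k with hm
  have hbpt : ∀ i, bpt w (i + 1) = k + bpt w' i := fun i => bpt_decomp w i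
  have step1 : bounce n w = ∑ i ∈ Finset.range n, (m - bpt w' i) := by
    unfold bounce
    apply Finset.sum_congr rfl
    intro i _
    rw [hbpt i]
    omega
  rw [step1]
  have hn' : n = (n - 1) + 1 := by omega
  rw [hn', Finset.sum_range_succ' (fun i => m - bpt w' i) (n-1)]
  simp only [bpt_zero, Nat.sub_zero]
  have step2 : ∑ i ∈ Finset.range (n - 1), (m - bpt w' (i + 1)) =
      ∑ i ∈ Finset.range m, (m - bpt w' (i + 1)) := by
    symm
    apply Finset.sum_subset
    · apply Finset.range_subset_range.mpr; omega
    · intro i _ hi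
      simp at hi
      have := bpt_lb w' hpre' (i + 1)
      rw [hcf'] at this
      omega
  rw [step2]
  unfold bounce
  omega

/-! ### choose identity -/

lemma choose_two_add (a b : ℕ) : (a + b).choose 2 = a.choose 2 + b.choose 2 + a * b := by
  induction b with
  | zero => simp
  | succ b ih =>
    have h1 : ∀ c : ℕ, (c + 1).choose 2 = c + c.choose 2 := by
      intro c
      rw [Nat.choose_succ_succ]
      simp [Nat.choose_one_right]
    rw [show a + (b + 1) = (a + b) + 1 by omega, h1, ih, h1]
    ring_nf

/-! ### g equation and bounds -/

lemma g_succ (n : ℕ) :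
    g (n + 1) = (Finset.range (n + 1)).sup (fun j => j * (n - j) + g (n - j)) := by
  rw [g]

lemma g_le_term (n j : ℕ) (hj : j < n + 1) :
    j * (n - j) + g (n - j) ≤ g (n + 1) := by
  rw [g_succ]
  exact Finset.le_sup (f := fun j => j * (n - j) + g (n - j)) (Finset.mem_range.mpr hj)

/-! ### lower bound -/

lemma lower_bound : ∀ n, ∀ w, IsDyck n w → n.choose 2 ≤ area w + bounce n w + g n := by
  intro n
  induction n using Nat.strong_induction_on with
  | _ n ih =>
    intro w hw
    rcases Nat.eq_zero_or_pos n with h0 | hpos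
    · subst h0; simp
    · set k := hgt w 0 with hk
      set w' := dropF k (w.drop k) with hw'
      have hd := dyck_decomp n w hw
      rw [← hk, ← hw'] at hd
      have hkn : k ≤ n := hw.2.1 ▸ hgt_le w 0
      have hk1 : 1 ≤ k := by
        have hcf : w.count false = n := by
          have := count_true_add_count_false w
          have := hw.1; have := hw.2.1; omega
        have := hgt_lb w 0 0 (by simpa using hw.2.2)
        rw [hcf] at this
        omega
      set m := n - k with hm
      have harea := area_decomp w
      rw [← hk, ← hw'] at harea
      have hbounce := bounce_decomp n w hw hpos
      rw [← hk, ← hw', ← hm] at hbounce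
      have hih := ih m (by omega) w' hd
      have hg : (k - 1) * m + g m ≤ g n := by
        have hn1 : n = (n - 1) + 1 := by omega
        have := g_le_term (n - 1) (k - 1) (by omega)
        rw [show (n:ℕ) - 1 - (k - 1) = m by omega] at this
        rw [hn1]
        exact this
      have hch : n.choose 2 = k.choose 2 + m.choose 2 + k * m := by
        rw [show n = k + m by omega, choose_two_add]
      have hkm : k * m = m + (k - 1) * m := by
        conv_lhs => rw [show k = (k - 1) + 1 from by omega]
        rw [Nat.succ_mul]
        omega
      omega

/-! ### witness -/

lemma dyck_append (a b : ℕ) (u v : List Bool) (hu : IsDyck a u) (hv : IsDyck b v) :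
    IsDyck (a + b) (u ++ v) := by
  obtain ⟨hl1, hc1, hp1⟩ := hu
  obtain ⟨hl2, hc2, hp2⟩ := hv
  refine ⟨by simp [hl1, hl2]; omega, by simp [List.count_append, hc1, hc2], ?_⟩
  intro p
  rw [List.take_append]
  simp only [List.count_append]
  have := hp1 p
  have := hp2 (p - u.length)
  omega

lemma dyck_block (k : ℕ) :
    IsDyck k (List.replicate k true ++ List.replicate k false) := by
  refine ⟨by simp; omega, by simp [List.count_append, List.count_replicate], ?_⟩
  intro p
  rw [List.take_append]
  simp [List.take_replicate, List.count_replicate, List.count_append]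

lemma witness : ∀ n, ∃ w, IsDyck n w ∧ area w + bounce n w + g n = n.choose 2 := by
  intro n
  induction n using Nat.strong_induction_on with
  | _ n ih =>
    rcases Nat.eq_zero_or_pos n with h0 | hpos
    · subst h0
      refine ⟨[], ⟨rfl, rfl, by simp⟩, ?_⟩
      simp [area, bounce, g]
    · obtain ⟨n', rfl⟩ : ∃ n', n = n' + 1 := ⟨n - 1, by omega⟩
      obtain ⟨j, hj, hgj⟩ := Finset.exists_mem_eq_sup (Finset.range (n' + 1))
        ⟨0, Finset.mem_range.mpr (by omega)⟩ (fun j => j * (n' - j) + g (n' - j))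
      rw [Finset.mem_range] at hj
      set k := j + 1 with hkdef
      set m := n' - j with hmdef
      have hnm : n' + 1 = k + m := by omega
      obtain ⟨u, hu, hval⟩ := ih m (by omega)
      set w := List.replicate k true ++ List.replicate k false ++ u with hwdef
      have hdw : IsDyck (n' + 1) w := by
        rw [hnm, hwdef, List.append_assoc, ← List.append_assoc]
        exact dyck_append k m _ u (dyck_block k) hu
      refine ⟨w, hdw, ?_⟩
      -- identify the decomposition data
      have hhgt : hgt w 0 = k := by
        rw [hwdef, List.append_assoc, hgt_rep_true, hkdef, List.replicate_succ,
          List.cons_append]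
        rfl
      have hdrop : dropF (hgt w 0) (w.drop (hgt w 0)) = u := by
        rw [hhgt, hwdef, List.append_assoc, List.drop_left' (List.length_replicate : (List.replicate k true).length = k),
          dropF_rep_false]
      have harea : area w = k.choose 2 + area u := by
        rw [area_eq, area_eq, hwdef, List.append_assoc, A_rep_true, A_rep_false]
        simp only [Nat.zero_add]
        congr 1
        simpa using A_shift' u 0 0 k
      have hbounce : bounce (n' + 1) w = m + bounce m u := by
        have := bounce_decomp (n' + 1) w hdw (by omega)
        rw [hdrop, hhgt, show n' + 1 - k = m by omega] at this
        exact this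
      have hg : g (n' + 1) = (k - 1) * m + g m := by
        rw [g_succ, hgj]
        simp [hkdef, hmdef]
      have hch : (n' + 1).choose 2 = k.choose 2 + m.choose 2 + k * m := by
        rw [hnm, choose_two_add]
      have hkm : k * m = m + (k - 1) * m := by
        rw [hkdef, Nat.succ_mul, Nat.add_sub_cancel]
        omega
      omega

theorem stmt7 (n : ℕ) :
    IsLeast {x : ℕ | ∃ w : List Bool, IsDyck n w ∧ area w + bounce n w = x}
      (n.choose 2 - g n) := by
  constructor
  · obtain ⟨w, hw, hval⟩ := witness n
    exact ⟨w, hw, by omega⟩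
  · rintro x ⟨w, hw, rfl⟩
    have := lower_bound n w hw
    omega
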